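/- For all ψ, θ, φ ∈ ℝ and u ∈ ℝ³, one has (as 2×2 complex matrices) exp((iψ/2)σ₃)·exp((iθ/2)σ₁)·exp((iφ/2)σ₃)·(u·σ)·exp(−(iφ/2)σ₃)·exp(−(iθ/2)σ₁)·exp(−(iψ/2)σ₃) = (R₃(ψ)·R₁(θ)·R₃(φ)·u)·σ. -/

import Mathlib

open Matrix

/-- The Pauli matrices. -/
noncomputable def pauli1 : Matrix (Fin 2) (Fin 2) ℂ := !![0, 1; 1, 0]
noncomputable def pauli2 : Matrix (Fin 2) (Fin 2) ℂ := !![0, -Complex.I; Complex.I, 0]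
noncomputable def pauli3 : Matrix (Fin 2) (Fin 2) ℂ := !![1, 0; 0, -1]

/-- For `v ∈ ℝ³`, the matrix `v·σ = v₁σ₁ + v₂σ₂ + v₃σ₃`. -/
noncomputable def pauliDot (v : Fin 3 → ℝ) : Matrix (Fin 2) (Fin 2) ℂ :=
  (v 0 : ℂ) • pauli1 + (v 1 : ℂ) • pauli2 + (v 2 : ℂ) • pauli3

/-- Rotation about the first axis. -/
noncomputable def R1 (q : ℝ) : Matrix (Fin 3) (Fin 3) ℝ :=
  !![1, 0, 0;
     0, Real.cos q, Real.sin q;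
     0, -Real.sin q, Real.cos q]

/-- Rotation about the third axis. -/
noncomputable def R3 (q : ℝ) : Matrix (Fin 3) (Fin 3) ℝ :=
  !![Real.cos q, Real.sin q, 0;
     -Real.sin q, Real.cos q, 0;
     0, 0, 1]

/-!
Since `σ₁² = σ₃² = 1`, the exponential series splits into its even and odd parts, giving
`exp((iα)σₖ) = cos α + i sin α σₖ`. Conjugating `v·σ` by `c + i s σₖ` (with `c, s` the cosine and
sine of `q/2`) is then a polynomial identity in `c, s`, and the double-angle formulas turn its
coefficients into the rotation `Rₖ(q)`. Composing the three single-axis conjugations gives the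
Euler-angle formula.
-/

open NormedSpace Complex

theorem pow_eq_of_mul_self_eq_one {K R : Type*} [Field K] [CharZero K] [Ring R] [Algebra K R]
    {a : R} (ha : a * a = 1) (n : ℕ) :
    a ^ n = ((1 + (-1) ^ n) / 2 : K) • 1 + ((1 - (-1) ^ n) / 2 : K) • a := by
  obtain ⟨k, rfl | rfl⟩ := Nat.even_or_odd' n
  · rw [pow_mul, sq, ha, one_pow]; norm_num [pow_mul]
  · rw [pow_succ, pow_mul, sq, ha, one_pow, one_mul]; norm_num [pow_succ, pow_mul]

section Involution

variable {A : Type*} [Ring A] [Algebra ℂ A] [TopologicalSpace A] [IsTopologicalRing A]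
  [ContinuousSMul ℂ A] [T2Space A] {a : A}

theorem exp_smul_of_mul_self_eq_one (ha : a * a = 1) (z : ℂ) :
    exp (z • a) = cosh z • 1 + sinh z • a := by
  have hterm : ∀ n : ℕ, (n.factorial : ℂ)⁻¹ • (z • a) ^ n =
      (((n.factorial : ℂ)⁻¹ • z ^ n + (n.factorial : ℂ)⁻¹ • (-z) ^ n) / 2) • (1 : A) +
      (((n.factorial : ℂ)⁻¹ • z ^ n - (n.factorial : ℂ)⁻¹ • (-z) ^ n) / 2) • a := by
    intro n
    rw [smul_pow, pow_eq_of_mul_self_eq_one (K := ℂ) ha, neg_pow, smul_add, smul_add, smul_smul,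
      smul_smul, smul_smul, smul_smul]
    congr 2 <;> simp only [smul_eq_mul] <;> ring
  have hz := exp_series_hasSum_exp' (𝕂 := ℂ) z
  have hnz := exp_series_hasSum_exp' (𝕂 := ℂ) (-z)
  have hsum := (((hz.add hnz).div_const 2).smul_const (1 : A)).add
    (((hz.sub hnz).div_const 2).smul_const a)
  simp only [← hterm] at hsum
  rw [congrFun (exp_eq_tsum ℂ) (z • a), hsum.tsum_eq, cosh, sinh, exp_eq_exp_ℂ]

theorem exp_I_mul_ofReal_smul_of_mul_self_eq_one (ha : a * a = 1) (t : ℝ) :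
    exp ((I * t) • a) = (Real.cos t : ℂ) • 1 + (I * Real.sin t) • a := by
  rw [exp_smul_of_mul_self_eq_one ha, mul_comm, cosh_mul_I, sinh_mul_I, mul_comm (sin _),
    ofReal_cos, ofReal_sin]

theorem exp_neg_I_mul_ofReal_smul_of_mul_self_eq_one (ha : a * a = 1) (t : ℝ) :
    exp ((-(I * t)) • a) = (Real.cos t : ℂ) • 1 - (I * Real.sin t) • a := by
  rw [← mul_neg, ← ofReal_neg, exp_I_mul_ofReal_smul_of_mul_self_eq_one ha, Real.cos_neg,
    Real.sin_neg, ofReal_neg, mul_neg, neg_smul, sub_eq_add_neg]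

end Involution

theorem pauli1_mul_self : pauli1 * pauli1 = 1 := by
  simp [pauli1, ← Matrix.one_fin_two]

theorem pauli3_mul_self : pauli3 * pauli3 = 1 := by
  simp [pauli3, ← Matrix.one_fin_two]

theorem pauliDot_conj_pauli1 (c s : ℝ) (v : Fin 3 → ℝ) :
    ((c : ℂ) • 1 + (I * s) • pauli1) * pauliDot v * ((c : ℂ) • 1 - (I * s) • pauli1) =
      pauliDot ![(c ^ 2 + s ^ 2) * v 0, (c ^ 2 - s ^ 2) * v 1 + 2 * c * s * v 2,
        -(2 * c * s) * v 1 + (c ^ 2 - s ^ 2) * v 2] := by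
  ext i j
  fin_cases i <;> fin_cases j <;>
    simp [pauliDot, pauli1, pauli2, pauli3, Matrix.mul_apply, Fin.sum_univ_two] <;>
    ring_nf <;> simp only [I_sq, I_pow_three] <;> ring

theorem pauliDot_conj_pauli3 (c s : ℝ) (v : Fin 3 → ℝ) :
    ((c : ℂ) • 1 + (I * s) • pauli3) * pauliDot v * ((c : ℂ) • 1 - (I * s) • pauli3) =
      pauliDot ![(c ^ 2 - s ^ 2) * v 0 + 2 * c * s * v 1, -(2 * c * s) * v 0 + (c ^ 2 - s ^ 2) * v 1,
        (c ^ 2 + s ^ 2) * v 2] := by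
  ext i j
  fin_cases i <;> fin_cases j <;>
    simp [pauliDot, pauli1, pauli2, pauli3, Matrix.mul_apply, Fin.sum_univ_two] <;>
    ring_nf <;> simp only [I_sq, I_pow_three] <;> ring

theorem R1_two_mul_mulVec (x : ℝ) (v : Fin 3 → ℝ) :
    R1 (2 * x) *ᵥ v = ![(Real.cos x ^ 2 + Real.sin x ^ 2) * v 0,
      (Real.cos x ^ 2 - Real.sin x ^ 2) * v 1 + 2 * Real.cos x * Real.sin x * v 2,
      -(2 * Real.cos x * Real.sin x) * v 1 + (Real.cos x ^ 2 - Real.sin x ^ 2) * v 2] := by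
  ext i
  fin_cases i <;> simp [R1, Matrix.mulVec, dotProduct, Fin.sum_univ_three] <;>
    simp only [Real.cos_two_mul', Real.sin_two_mul] <;> ring

theorem R3_two_mul_mulVec (x : ℝ) (v : Fin 3 → ℝ) :
    R3 (2 * x) *ᵥ v = ![(Real.cos x ^ 2 - Real.sin x ^ 2) * v 0 + 2 * Real.cos x * Real.sin x * v 1,
      -(2 * Real.cos x * Real.sin x) * v 0 + (Real.cos x ^ 2 - Real.sin x ^ 2) * v 1,
      (Real.cos x ^ 2 + Real.sin x ^ 2) * v 2] := by
  ext i
  fin_cases i <;> simp [R3, Matrix.mulVec, dotProduct, Fin.sum_univ_three] <;>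
    simp only [Real.cos_two_mul', Real.sin_two_mul] <;> ring

theorem exp_pauli1_conj_pauliDot (q : ℝ) (v : Fin 3 → ℝ) :
    exp ((I * (q / 2)) • pauli1) * pauliDot v * exp ((-(I * (q / 2))) • pauli1) =
      pauliDot (R1 q *ᵥ v) := by
  rw [← ofReal_ofNat 2, ← ofReal_div, exp_I_mul_ofReal_smul_of_mul_self_eq_one pauli1_mul_self,
    exp_neg_I_mul_ofReal_smul_of_mul_self_eq_one pauli1_mul_self, pauliDot_conj_pauli1,
    ← R1_two_mul_mulVec, mul_div_cancel₀ q two_ne_zero]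

theorem exp_pauli3_conj_pauliDot (q : ℝ) (v : Fin 3 → ℝ) :
    exp ((I * (q / 2)) • pauli3) * pauliDot v * exp ((-(I * (q / 2))) • pauli3) =
      pauliDot (R3 q *ᵥ v) := by
  rw [← ofReal_ofNat 2, ← ofReal_div, exp_I_mul_ofReal_smul_of_mul_self_eq_one pauli3_mul_self,
    exp_neg_I_mul_ofReal_smul_of_mul_self_eq_one pauli3_mul_self, pauliDot_conj_pauli3,
    ← R3_two_mul_mulVec, mul_div_cancel₀ q two_ne_zero]

/-- Euler-angle form of the unitary implementing a rotation:
`exp((iψ/2)σ₃)·exp((iθ/2)σ₁)·exp((iφ/2)σ₃)·(u·σ)·exp(−(iφ/2)σ₃)·exp(−(iθ/2)σ₁)·exp(−(iψ/2)σ₃)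
 = (R₃(ψ)·R₁(θ)·R₃(φ)·u)·σ`. -/
theorem stmt_17 (ψ θ φ : ℝ) (u : Fin 3 → ℝ) :
    NormedSpace.exp ((Complex.I * (ψ / 2)) • pauli3) *
    NormedSpace.exp ((Complex.I * (θ / 2)) • pauli1) *
    NormedSpace.exp ((Complex.I * (φ / 2)) • pauli3) *
    pauliDot u *
    NormedSpace.exp ((-(Complex.I * (φ / 2))) • pauli3) *
    NormedSpace.exp ((-(Complex.I * (θ / 2))) • pauli1) *
    NormedSpace.exp ((-(Complex.I * (ψ / 2))) • pauli3) =
    pauliDot ((R3 ψ * R1 θ * R3 φ).mulVec u) := by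
  rw [← mulVec_mulVec, ← mulVec_mulVec, ← exp_pauli3_conj_pauliDot, ← exp_pauli1_conj_pauliDot,
    ← exp_pauli3_conj_pauliDot]
  simp only [mul_assoc]
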